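/- Let K be an algebraically closed field and H a finite group admitting a normal subgroup U such that H/U is abelian and every element of U has order a power of char K (U trivial if char K = 0). Then every nonzero finite-dimensional representation of H over K has a common eigenvector, i.e. a nonzero vector v such that every h ∈ H sends v to a scalar multiple of v. -/

import Mathlib

/-!
The `U`-invariants `W` of `V` are nonzero (`U` is trivial in characteristic zero): in
characteristic `p > 0` the `p`-group `U` has a nonzero fixed point in the finite `𝔽_p`-span of
any orbit, since the fixed points of a `p`-group acting on a finite set are congruent to its
cardinality mod `p`. As `U` is normal, `W` is `H`-stable, and the action on `W` factors through
the abelian group `H ⧸ U`. Commuting operators on a nonzero finite-dimensional space over an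
algebraically closed field share an eigenvector.
-/

open Module End Set MulAction

namespace Submodule

variable {K V : Type*} [Field K] [AddCommGroup V] [Module K V]

theorem exists_inf_eigenspace_ne_bot [IsAlgClosed K] [FiniteDimensional K V] {p : Submodule K V}
    (hp : p ≠ ⊥) {f : End K V} (hfp : MapsTo f p p) : ∃ μ, p ⊓ f.eigenspace μ ≠ ⊥ := by
  have : Nontrivial p := nontrivial_iff_ne_bot.mpr hp
  obtain ⟨μ, hμ⟩ := exists_eigenvalue (f.restrict hfp)
  refine ⟨μ, ?_⟩
  rw [p.inf_genEigenspace f hfp]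
  simpa using (map_injective_of_injective p.injective_subtype).ne hμ

theorem exists_common_eigenvector_of_commute [IsAlgClosed K] [FiniteDimensional K V] {ι : Type*}
    {f : ι → End K V} (hf : ∀ i j, Commute (f i) (f j)) {p : Submodule K V} (hp : p ≠ ⊥)
    (hfp : ∀ i, MapsTo (f i) p p) : ∃ v ∈ p, v ≠ 0 ∧ ∀ i, ∃ c : K, f i v = c • v := by
  by_cases hscalar : ∀ i, ∃ c, p ≤ (f i).eigenspace c
  · obtain ⟨v, hvp, hv⟩ := exists_mem_ne_zero_of_ne_bot hp
    refine ⟨v, hvp, hv, fun i => ?_⟩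
    obtain ⟨c, hc⟩ := hscalar i
    exact ⟨c, mem_eigenspace_iff.mp (hc hvp)⟩
  push Not at hscalar
  obtain ⟨i, hi⟩ := hscalar
  obtain ⟨μ, hμ⟩ := exists_inf_eigenspace_ne_bot hp (hfp i)
  have hlt : p ⊓ (f i).eigenspace μ < p :=
    inf_le_left.lt_of_ne fun h => hi μ (h ▸ inf_le_right)
  have hmaps : ∀ j, MapsTo (f j) ↑(p ⊓ (f i).eigenspace μ) ↑(p ⊓ (f i).eigenspace μ) :=
    fun j => (hfp j).inter_inter (mapsTo_genEigenspace_of_comm (hf i j) μ 1)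
  obtain ⟨v, hv, hv0, hvf⟩ := exists_common_eigenvector_of_commute hf hμ hmaps
  exact ⟨v, (inf_le_left : _ ≤ p) hv, hv0, hvf⟩
termination_by finrank K p
decreasing_by exact finrank_lt_finrank_of_lt hlt

end Submodule

theorem Module.End.exists_common_eigenvector_of_commute {K V ι : Type*} [Field K] [IsAlgClosed K]
    [AddCommGroup V] [Module K V] [FiniteDimensional K V] [Nontrivial V] {f : ι → End K V}
    (hf : ∀ i j, Commute (f i) (f j)) : ∃ v ≠ 0, ∀ i, ∃ c : K, f i v = c • v := by
  obtain ⟨v, -, hv⟩ :=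
    Submodule.exists_common_eigenvector_of_commute hf top_ne_bot fun _ => mapsTo_univ _ _
  exact ⟨v, hv⟩

theorem IsPGroup.exists_mem_fixedPoints_ne_zero {p : ℕ} [Fact p.Prime] {G M : Type*} [Group G]
    [Finite G] [AddCommGroup M] [DistribMulAction G M] (hG : IsPGroup p G)
    (hM : ∀ x : M, p • x = 0) {x : M} (hx : x ≠ 0) : ∃ y ∈ fixedPoints G M, y ≠ 0 := by
  let S : AddSubgroup M := .closure (orbit G x)
  have hS (g : G) {y : M} (hy : y ∈ S) : g • y ∈ S := by
    induction hy using AddSubgroup.closure_induction with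
    | mem y hy =>
      obtain ⟨h, rfl⟩ := hy
      exact AddSubgroup.subset_closure ⟨g * h, mul_smul g h x⟩
    | zero => simp
    | add y z _ _ hy hz => rw [smul_add]; exact S.add_mem hy hz
    | neg y _ hy => rw [smul_neg]; exact S.neg_mem hy
  let T : SubMulAction G M := ⟨S, fun g _ hy => hS g hy⟩
  have hxS : x ∈ S := AddSubgroup.subset_closure (mem_orbit_self x)
  have : Finite (orbit G x) := Set.finite_range _ |>.to_subtype
  have : Finite T := AddCommGroup.finite_of_fg_isAddTorsion S fun y =>
    isOfFinAddOrder_iff_nsmul_eq_zero.mpr ⟨p, (Fact.out : p.Prime).pos, Subtype.ext (hM y)⟩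
  have hpT : p ∣ Nat.card T := by
    have : addOrderOf (⟨x, hxS⟩ : S) = p :=
      addOrderOf_eq_prime (Subtype.ext (hM x)) (by simpa [Subtype.ext_iff] using hx)
    exact this ▸ addOrderOf_dvd_natCard _
  obtain ⟨y, hy, hy0⟩ := hG.exists_fixed_point_of_prime_dvd_card_of_fixed_point T hpT
    (a := ⟨0, S.zero_mem⟩) fun g => by ext; simp
  exact ⟨y, fun g => congr_arg Subtype.val (hy g), fun h => hy0 (Subtype.ext h.symm)⟩

namespace Representation

variable {k G V : Type*} [CommRing k] [Group G] [Finite G] [AddCommGroup V]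
  [Module k V] [Nontrivial V]

theorem invariants_ne_bot_of_isPGroup {p : ℕ} [Fact p.Prime] [CharP k p]
    (ρ : Representation k G V) (hG : IsPGroup p G) : ρ.invariants ≠ ⊥ := by
  let _ : DistribMulAction G V := .compHom V ρ
  obtain ⟨x, hx⟩ := exists_ne (0 : V)
  have hp (y : V) : p • y = 0 := by
    rw [← Nat.cast_smul_eq_nsmul k, CharP.cast_eq_zero, zero_smul]
  obtain ⟨y, hy, hy0⟩ := hG.exists_mem_fixedPoints_ne_zero hp hx
  exact (Submodule.ne_bot_iff _).mpr ⟨y, hy, hy0⟩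

theorem invariants_ne_bot_of_forall_orderOf_eq_ringChar_pow [IsDomain k]
    (ρ : Representation k G V) (hG : ∀ g : G, ∃ n, orderOf g = ringChar k ^ n) :
    ρ.invariants ≠ ⊥ := by
  obtain hp | hchar := CharP.char_is_prime_or_zero k (ringChar k)
  · have : Fact (ringChar k).Prime := ⟨hp⟩
    exact ρ.invariants_ne_bot_of_isPGroup (IsPGroup.iff_orderOf.mpr hG)
  · have hG1 (g : G) : g = 1 := by
      obtain ⟨n, hn⟩ := hG g
      rw [hchar] at hn
      rcases n with _ | n
      · simpa using hn
      · exact absurd hn (by simpa using (orderOf_pos g).ne')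
    have : ρ.invariants = ⊤ := eq_top_iff.mpr fun v _ g => by simp [hG1 g]
    simp [this]

end Representation

theorem QuotientGroup.commute_of_forall_commutator_mem {G : Type*} [Group G]
    {N : Subgroup G} [N.Normal] (hN : ∀ a b : G, a * b * a⁻¹ * b⁻¹ ∈ N) (x y : G ⧸ N) :
    Commute x y := by
  induction x using QuotientGroup.induction_on with | H a =>
  induction y using QuotientGroup.induction_on with | H b =>
  rw [Commute, SemiconjBy, ← QuotientGroup.mk_mul, ← QuotientGroup.mk_mul, QuotientGroup.eq]
  simpa [mul_assoc] using hN b⁻¹ a⁻¹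

theorem exists_common_eigenvector_of_unipotent_by_abelian {K : Type} [Field K] [IsAlgClosed K]
    (H : Type) [Group H] [Finite H] (U : Subgroup H) (hUnormal : U.Normal)
    (hUuni : ∀ u : H, u ∈ U → ∃ k : ℕ, orderOf u = ringChar K ^ k)
    (hUab : ∀ a b : H, a * b * a⁻¹ * b⁻¹ ∈ U)
    (V : Type) [AddCommGroup V] [Module K V] [FiniteDimensional K V]
    (ρ : Representation K H V) (hV : ∃ v : V, v ≠ 0) :
    ∃ v : V, v ≠ 0 ∧ ∀ h : H, ∃ c : K, ρ h v = c • v := by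
  obtain ⟨v₀, hv₀⟩ := hV
  have : Nontrivial V := ⟨v₀, 0, hv₀⟩
  have : Nontrivial (Representation.invariants (ρ.comp U.subtype)) :=
    Submodule.nontrivial_iff_ne_bot.mpr <|
      Representation.invariants_ne_bot_of_forall_orderOf_eq_ringChar_pow _ fun u =>
        (Subgroup.orderOf_coe u).symm ▸ hUuni u u.2
  obtain ⟨w, hw, hwρ⟩ := Module.End.exists_common_eigenvector_of_commute fun a b =>
    (QuotientGroup.commute_of_forall_commutator_mem hUab a b).map
      (ρ.quotientToInvariants U)
  refine ⟨w, by simpa using hw, fun h => ?_⟩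
  obtain ⟨c, hc⟩ := hwρ h
  exact ⟨c, congr_arg Subtype.val hc⟩
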